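/- arXiv:2502.00370 — 2 statements merged into one kernel-verified Lean document; each statement's English description precedes it below -/
import Mathlib

section
/- Let κ, η, ν, ρ ∈ ℝ with κ > 0. Both roots λ ∈ ℂ of λ² + (κ + iη)λ + (ν + iρ) = 0 satisfy Re(λ) < 0 if and only if κ(νκ + ρη) - ρ² > 0. -/
open Complex

/-- Routh–Hurwitz criterion for a monic quadratic with complex coefficients
`κ + iη` and `ν + iρ` (`κ, η, ν, ρ` real, `κ > 0`): both roots have strictly
negative real part iff `κ(νκ + ρη) - ρ² > 0`. -/
theorem complex_quadratic_hurwitz (κ η ν ρ : ℝ) (hκ : 0 < κ) (lam₁ lam₂ : ℂ)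
    (hfac : ∀ lam : ℂ,
      lam ^ 2 + ((κ : ℂ) + Complex.I * (η : ℂ)) * lam + ((ν : ℂ) + Complex.I * (ρ : ℂ))
        = (lam - lam₁) * (lam - lam₂)) :
    (lam₁.re < 0 ∧ lam₂.re < 0) ↔ κ * (ν * κ + ρ * η) - ρ ^ 2 > 0 := by
  have hprod : (ν : ℂ) + Complex.I * (ρ : ℂ) = lam₁ * lam₂ := by
    linear_combination hfac 0
  have hsum : (κ : ℂ) + Complex.I * (η : ℂ) = -(lam₁ + lam₂) := by
    linear_combination hfac 1 - hfac 0
  set a := lam₁.re; set b := lam₁.im; set c := lam₂.re; set d := lam₂.im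
  have hν : ν = a * c - b * d := by
    have := congrArg Complex.re hprod
    simpa [Complex.mul_re] using this
  have hρ : ρ = a * d + b * c := by
    have := congrArg Complex.im hprod
    simpa [Complex.mul_im] using this
  have hκ' : κ = -(a + c) := by
    have := congrArg Complex.re hsum
    simpa using this
  have hη : η = -(b + d) := by
    have := congrArg Complex.im hsum
    simpa using this
  have key : κ * (ν * κ + ρ * η) - ρ ^ 2 = a * c * ((a + c) ^ 2 + (b - d) ^ 2) := by
    rw [hν, hρ, hκ', hη]; ring
  rw [hκ'] at hκ
  rw [key]
  have hsumneg : a + c < 0 := by linarith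
  have hS : 0 < (a + c) ^ 2 + (b - d) ^ 2 := by nlinarith [sq_nonneg (b - d)]
  constructor
  · rintro ⟨ha, hc⟩
    exact mul_pos (mul_pos_of_neg_of_neg ha hc) hS
  · intro hE
    have hac : 0 < a * c := by
      rcases mul_pos_iff.mp hE with ⟨h1, _⟩ | ⟨_, h2⟩
      · exact h1
      · linarith
    constructor <;> nlinarith
end

section
/- If γ > 0 and γT + 2(αT)² > 2, then for all j ∈ {1,...,N-1} and all β ≥ 0, the stability inequality (2β(1-c_j)+γ)²(γ/T + 2α²) - (γ/T)²(1+c_j) > 0 holds, where c_j = cos(2πj/N). Hence all eigenvalues of B_closed other than λ = 0 have strictly negative real part. -/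
/-!
Let `(x, y)` be an eigenvector of `B_closed` for an eigenvalue `λ ≠ 0`. The first block row gives
`A y = λ x`; pairing the second row with `y` and multiplying by `λ` yields the scalar quadratic
`‖y‖² λ² + (β‖Ay‖² + γ‖y‖²) λ + (α²‖Ay‖² - (γ/T)⟪y, Ay⟫) = 0`.
Since `I + A` is the cyclic shift, a contraction, `Re ⟪y, Ay⟫ ≤ -‖Ay‖²/2`, and Cauchy–Schwarz gives
`(Im ⟪y, Ay⟫)² ≤ ‖y‖²‖Ay‖²`. Under `γT + 2(αT)² > 2`, i.e. `2(γ/T)² < γ²(γ/T + 2α²)`, these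
bounds give the Routh–Hurwitz condition `(Im q)² n < p² Re q` for `n λ² + p λ + q`, so `Re λ < 0`.
The scalar inequality follows from the same condition together with `1 + c_j ≤ 2`.
-/

open Matrix

theorem Complex.re_neg_of_quadratic_eq_zero {n p : ℝ} {q z : ℂ} (hn : 0 < n) (hp : 0 < p)
    (hq : q.im ^ 2 * n < p ^ 2 * q.re) (h : n * z ^ 2 + p * z + q = 0) : z.re < 0 := by
  have hre := congrArg Complex.re h
  have him := congrArg Complex.im h
  simp only [Complex.add_re, Complex.add_im, Complex.mul_re, Complex.mul_im, Complex.ofReal_re,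
    Complex.ofReal_im, pow_two, Complex.zero_re, Complex.zero_im] at hre him
  by_contra! hz
  have hqi : q.im = -(2 * n * z.re + p) * z.im := by linarith
  have hqr : q.re = n * z.im ^ 2 - n * z.re ^ 2 - p * z.re := by linarith
  rw [hqi, hqr] at hq
  -- `(Im q)² n - p² Re q = Re z (n Re z + p) (4 n² (Im z)² + p²)`
  nlinarith [mul_nonneg (mul_nonneg hz (by positivity : (0:ℝ) ≤ n * z.re + p))
    (by positivity : (0:ℝ) ≤ 4 * n ^ 2 * z.im ^ 2 + p ^ 2)]

theorem re_inner_le_neg_half_norm_sq {𝕜 E : Type*} [RCLike 𝕜] [NormedAddCommGroup E]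
    [InnerProductSpace 𝕜 E] {x y : E} (h : ‖x + y‖ ≤ ‖x‖) :
    RCLike.re (inner 𝕜 x y) ≤ -‖y‖ ^ 2 / 2 := by
  have := norm_add_sq (𝕜 := 𝕜) x y
  nlinarith [pow_le_pow_left₀ (norm_nonneg _) h 2]

theorem stability_condition_rescaled {α γ T : ℝ} (hγ : γ ≠ 0) (h : γ * T + 2 * (α * T) ^ 2 > 2) :
    2 * (γ / T) ^ 2 < γ ^ 2 * (γ / T + 2 * α ^ 2) := by
  have hT : T ≠ 0 := by rintro rfl; norm_num at h
  calc 2 * (γ / T) ^ 2 = γ ^ 2 / T ^ 2 * 2 := by ring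
    _ < γ ^ 2 / T ^ 2 * (γ * T + 2 * (α * T) ^ 2) := by gcongr
    _ = γ ^ 2 * (γ / T + 2 * α ^ 2) := by field_simp

theorem stability_margin_pos {β γ c K t : ℝ} (hγ : 0 ≤ γ) (hβ : 0 ≤ β) (ht : t ≤ 1)
    (hK : 2 * c ^ 2 < γ ^ 2 * K) :
    0 < (2 * β * (1 - t) + γ) ^ 2 * K - c ^ 2 * (1 + t) := by
  have hK₀ : 0 < K := pos_of_mul_pos_right (lt_of_le_of_lt (by positivity) hK) (sq_nonneg γ)
  have hγle : γ ^ 2 ≤ (2 * β * (1 - t) + γ) ^ 2 :=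
    pow_le_pow_left₀ hγ (by nlinarith) 2
  nlinarith [mul_le_mul_of_nonneg_right hγle hK₀.le, sq_nonneg c]

theorem closedLoop_hurwitz_ineq {a β γ c n m sr si : ℝ} (hγ : 0 < γ) (hc : 0 < c) (hβ : 0 ≤ β)
    (hn : 0 < n) (hm : 0 < m) (hK : 2 * c ^ 2 < γ ^ 2 * (c + 2 * a))
    (hsr : sr ≤ -m / 2) (hsi : si ^ 2 ≤ n * m) :
    (c * si) ^ 2 * n < (β * m + γ * n) ^ 2 * (a * m - c * sr) := by
  have hK₀ : 0 < c + 2 * a := pos_of_mul_pos_right (lt_of_le_of_lt (by positivity) hK) (sq_nonneg γ)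
  calc (c * si) ^ 2 * n ≤ c ^ 2 * (n * m) * n := by rw [mul_pow]; gcongr
    _ = (2 * c ^ 2) * (n ^ 2 * m / 2) := by ring
    _ < γ ^ 2 * (c + 2 * a) * (n ^ 2 * m / 2) := by gcongr
    _ = (γ * n) ^ 2 * ((c + 2 * a) * m / 2) := by ring
    _ ≤ (β * m + γ * n) ^ 2 * ((c + 2 * a) * m / 2) := by gcongr; nlinarith
    _ ≤ (β * m + γ * n) ^ 2 * (a * m - c * sr) := by gcongr; nlinarith

theorem Matrix.exists_mulVec_eq_smul_of_mem_spectrum {K ι : Type*} [Field K] [Fintype ι]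
    [DecidableEq ι] {M : Matrix ι ι K} {μ : K} (h : μ ∈ spectrum K M) :
    ∃ v ≠ 0, M *ᵥ v = μ • v := by
  rw [← Matrix.spectrum_toLin', ← Module.End.hasEigenvalue_iff_mem_spectrum] at h
  obtain ⟨v, hv⟩ := h.exists_hasEigenvector
  exact ⟨v, hv.2, by simpa using hv.apply_eq_smul⟩

-- For `N = 1` this is `-1` rather than `shift - 1`, since then `n + 1 = n`.
def cyclicDifference (R : Type*) [Ring R] (N : ℕ) [NeZero N] : Matrix (Fin N) (Fin N) R :=
  Matrix.of fun n m => if m = n then -1 else if m = n + 1 then 1 else 0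

section cyclic

variable {N : ℕ} [NeZero N]

theorem cyclicDifference_map {R S : Type*} [Ring R] [Ring S] (f : R →+* S) :
    (cyclicDifference R N).map f = cyclicDifference S N := by
  ext n m
  simp only [cyclicDifference, map_apply, of_apply]
  split_ifs <;> simp

theorem add_cyclicDifference_mulVec {R : Type*} [Ring R] (y : Fin N → R) (i : Fin N) :
    (y + cyclicDifference R N *ᵥ y) i = if i + 1 = i then 0 else y (i + 1) := by
  simp only [Pi.add_apply, mulVec, dotProduct, cyclicDifference, of_apply, ite_mul, neg_mul,
    one_mul, zero_mul]
  split_ifs with h <;> simp [Finset.sum_ite, Finset.filter_eq', h]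

theorem norm_add_cyclicDifference_mulVec_le {𝕜 : Type*} [RCLike 𝕜] (y : Fin N → 𝕜) :
    ‖WithLp.toLp 2 (y + cyclicDifference 𝕜 N *ᵥ y)‖ ≤ ‖WithLp.toLp 2 y‖ := by
  rw [EuclideanSpace.norm_eq, EuclideanSpace.norm_eq]
  apply Real.sqrt_le_sqrt
  calc ∑ i, ‖(WithLp.toLp 2 (y + cyclicDifference 𝕜 N *ᵥ y)) i‖ ^ 2 ≤ ∑ i, ‖y (i + 1)‖ ^ 2 := by
        gcongr with i
        rw [WithLp.ofLp_toLp, add_cyclicDifference_mulVec]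
        split_ifs <;> simp
    _ = ∑ i, ‖y i‖ ^ 2 := Equiv.sum_comp (Equiv.addRight 1) (fun i => ‖y i‖ ^ 2)

end cyclic

def closedLoopMatrix {ι R : Type*} [Fintype ι] [DecidableEq ι] [CommRing R] [StarRing R]
    (A : Matrix ι ι R) (a c β γ : R) : Matrix (ι ⊕ ι) (ι ⊕ ι) R :=
  fromBlocks 0 A (c • 1 - a • Aᴴ) (-β • (Aᴴ * A) - γ • 1)

section closedLoop

open WithLp

variable {ι : Type*} [Fintype ι] [DecidableEq ι]

theorem closedLoopMatrix_map (A : Matrix ι ι ℝ) (a c β γ : ℝ) :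
    (closedLoopMatrix A a c β γ).map (algebraMap ℝ ℂ) =
      closedLoopMatrix (A.map (algebraMap ℝ ℂ)) a c β γ := by
  ext (i | i) (j | j) <;> by_cases hij : i = j <;>
    simp [closedLoopMatrix, hij, one_apply, mul_apply]

theorem closedLoopMatrix_mulVec_eq_smul_iff {A : Matrix ι ι ℂ} {a c β γ μ : ℂ} {x y : ι → ℂ} :
    closedLoopMatrix A a c β γ *ᵥ Sum.elim x y = μ • Sum.elim x y ↔
      A *ᵥ y = μ • x ∧ (c • 1 - a • Aᴴ) *ᵥ x + (-β • (Aᴴ * A) - γ • 1) *ᵥ y = μ • y := by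
  have hsmul : μ • Sum.elim x y = Sum.elim (μ • x) (μ • y) := by ext (i | i) <;> rfl
  rw [closedLoopMatrix, fromBlocks_mulVec, hsmul, Sum.elim_eq_iff, Sum.elim_comp_inl,
    Sum.elim_comp_inr, zero_mulVec, zero_add]

theorem closedLoopMatrix_quadratic (A : Matrix ι ι ℂ) (a c β γ μ : ℂ) {x y : ι → ℂ}
    (hx : A *ᵥ y = μ • x) (hy : (c • 1 - a • Aᴴ) *ᵥ x + (-β • (Aᴴ * A) - γ • 1) *ᵥ y = μ • y) :
    (‖toLp 2 y‖ : ℂ) ^ 2 * μ ^ 2 + (β * ‖toLp 2 (A *ᵥ y)‖ ^ 2 + γ * ‖toLp 2 y‖ ^ 2) * μ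
      + (a * ‖toLp 2 (A *ᵥ y)‖ ^ 2 - c * inner ℂ (toLp 2 y) (toLp 2 (A *ᵥ y))) = 0 := by
  have hinner : ∀ u v : ι → ℂ, inner ℂ (toLp 2 u) (toLp 2 v) = star u ⬝ᵥ v := fun u v =>
    dotProduct_comm _ _
  have hnorm : ∀ u : ι → ℂ, (‖toLp 2 u‖ : ℂ) ^ 2 = star u ⬝ᵥ u := fun u => by
    rw [← hinner, inner_self_eq_norm_sq_to_K]; rfl
  have hadj : ∀ u v : ι → ℂ, star u ⬝ᵥ (Aᴴ *ᵥ v) = star (A *ᵥ u) ⬝ᵥ v := fun u v => by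
    rw [dotProduct_mulVec, star_mulVec]
  have hy' := congrArg (star y ⬝ᵥ ·) hy
  simp only [dotProduct_add, sub_mulVec, smul_mulVec, one_mulVec, dotProduct_sub,
    dotProduct_smul, smul_eq_mul, ← mulVec_mulVec, hadj] at hy'
  have hyx : μ * (star y ⬝ᵥ x) = star y ⬝ᵥ (A *ᵥ y) := by rw [hx, dotProduct_smul, smul_eq_mul]
  have hwx : μ * (star (A *ᵥ y) ⬝ᵥ x) = star (A *ᵥ y) ⬝ᵥ (A *ᵥ y) := by
    rw [hx, dotProduct_smul, smul_eq_mul]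
  rw [hnorm, hnorm, hinner]
  linear_combination (-μ) * hy' + c * hyx - a * hwx

theorem re_neg_of_mem_spectrum_closedLoopMatrix {A : Matrix ι ι ℂ}
    (hA : ∀ y : ι → ℂ, ‖toLp 2 (y + A *ᵥ y)‖ ≤ ‖toLp 2 y‖) {a c β γ : ℝ} (hγ : 0 < γ)
    (hc : 0 < c) (hβ : 0 ≤ β) (hK : 2 * c ^ 2 < γ ^ 2 * (c + 2 * a)) {μ : ℂ}
    (hμ : μ ∈ spectrum ℂ (closedLoopMatrix A a c β γ)) (hμ₀ : μ ≠ 0) : μ.re < 0 := by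
  obtain ⟨v, hv₀, hv⟩ := exists_mulVec_eq_smul_of_mem_spectrum hμ
  rw [← Sum.elim_comp_inl_inr v] at hv₀ hv
  obtain ⟨hx, hy⟩ := closedLoopMatrix_mulVec_eq_smul_iff.1 hv
  set y := v ∘ Sum.inr
  have hy₀ : y ≠ 0 := by
    rintro hy₀
    rw [hy₀, mulVec_zero, eq_comm, smul_eq_zero] at hx
    exact hv₀ (by rw [hy₀, hx.resolve_left hμ₀]; ext (i | i) <;> rfl)
  have hquad := closedLoopMatrix_quadratic A a c β γ μ hx hy
  set Y := toLp 2 y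
  set W := toLp 2 (A *ᵥ y)
  have hY : 0 < ‖Y‖ := norm_pos_iff.2 (by simpa [Y] using hy₀)
  rcases (norm_nonneg W).eq_or_lt with hW | hW
  · rw [← hW, norm_eq_zero.1 hW.symm, inner_zero_right] at hquad
    push_cast at hquad
    have : μ = -γ := by
      have hY' : (‖Y‖ : ℂ) ^ 2 ≠ 0 := by exact_mod_cast (pow_pos hY 2).ne'
      apply mul_left_cancel₀ (mul_ne_zero hY' hμ₀)
      linear_combination hquad
    simp [this, hγ]
  · set s := inner ℂ Y W
    have hsr : s.re ≤ -‖W‖ ^ 2 / 2 := re_inner_le_neg_half_norm_sq (𝕜 := ℂ) (hA y)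
    have hsi : s.im ^ 2 ≤ ‖Y‖ ^ 2 * ‖W‖ ^ 2 := by
      rw [← mul_pow, ← sq_abs]
      exact pow_le_pow_left₀ (abs_nonneg _)
        ((Complex.abs_im_le_norm s).trans (norm_inner_le_norm Y W)) 2
    refine Complex.re_neg_of_quadratic_eq_zero (n := ‖Y‖ ^ 2) (p := β * ‖W‖ ^ 2 + γ * ‖Y‖ ^ 2)
      (q := ((a * ‖W‖ ^ 2 : ℝ) : ℂ) - c * s) (by positivity) (by positivity) ?_
      (by push_cast; exact hquad)
    simp only [Complex.sub_re, Complex.sub_im, Complex.ofReal_re, Complex.ofReal_im,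
      Complex.re_ofReal_mul, Complex.im_ofReal_mul, zero_sub, neg_sq]
    exact closedLoop_hurwitz_ineq hγ hc hβ (pow_pos hY 2) (pow_pos hW 2) hK hsr hsi

end closedLoop

theorem closedloop_sufficient_stability_general (N : ℕ) [NeZero N] (α γ T : ℝ)
    (hγ : 0 < γ) (hT : 0 < T)
    (hcond : γ * T + 2 * (α * T) ^ 2 > 2) :
    (∀ j : ℕ, 1 ≤ j → j ≤ N - 1 → ∀ β : ℝ, 0 ≤ β →
      (2 * β * (1 - Real.cos (2 * Real.pi * j / N)) + γ) ^ 2 * (γ / T + 2 * α ^ 2)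
        - (γ / T) ^ 2 * (1 + Real.cos (2 * Real.pi * j / N)) > 0) ∧
    (∀ β : ℝ, 0 ≤ β →
      ∀ A : Matrix (Fin N) (Fin N) ℝ,
        (∀ n m : Fin N, A n m = if m = n then -1 else if m = n + 1 then 1 else 0) →
      ∀ B : Matrix (Fin N ⊕ Fin N) (Fin N ⊕ Fin N) ℝ,
        B = Matrix.fromBlocks 0 A ((γ / T) • 1 - (α ^ 2) • Aᵀ) (-β • (Aᵀ * A) - γ • 1) →
      ∀ lam : ℂ, lam ∈ spectrum ℂ (B.map (algebraMap ℝ ℂ)) → lam ≠ 0 → lam.re < 0) := by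
  have hK := stability_condition_rescaled hγ.ne' hcond
  refine ⟨fun j _ _ β hβ => stability_margin_pos hγ.le hβ (Real.cos_le_one _) hK, ?_⟩
  intro β hβ A hA B hB μ hμ hμ₀
  have hA' : A = cyclicDifference ℝ N := Matrix.ext hA
  have hB' : B.map (algebraMap ℝ ℂ) =
      closedLoopMatrix (cyclicDifference ℂ N) (α ^ 2 : ℝ) (γ / T : ℝ) β γ := by
    rw [hB, hA', ← cyclicDifference_map (algebraMap ℝ ℂ), ← closedLoopMatrix_map, closedLoopMatrix,
      conjTranspose_eq_transpose_of_trivial]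
  rw [hB'] at hμ
  exact re_neg_of_mem_spectrum_closedLoopMatrix norm_add_cyclicDifference_mulVec_le hγ
    (by positivity) hβ (by linarith) hμ hμ₀

/-- If `γ > 0` and `γT + 2(αT)² > 2`, then for all `j ∈ {1,…,N-1}` and all `β ≥ 0`
the stability inequality `(2β(1-c_j)+γ)²(γ/T + 2α²) - (γ/T)²(1+c_j) > 0` holds,
with `c_j = cos(2πj/N)`; hence all eigenvalues of the closed-loop matrix `B_closed`
other than `0` have strictly negative real part. -/
theorem closedloop_sufficient_stability (N : ℕ) [NeZero N] (α γ T : ℝ)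
    (hα : 0 ≤ α) (hγ : 0 < γ) (hT : 0 < T)
    (hcond : γ * T + 2 * (α * T) ^ 2 > 2) :
    (∀ j : ℕ, 1 ≤ j → j ≤ N - 1 → ∀ β : ℝ, 0 ≤ β →
      (2 * β * (1 - Real.cos (2 * Real.pi * j / N)) + γ) ^ 2 * (γ / T + 2 * α ^ 2)
        - (γ / T) ^ 2 * (1 + Real.cos (2 * Real.pi * j / N)) > 0) ∧
    (∀ β : ℝ, 0 ≤ β →
      ∀ A : Matrix (Fin N) (Fin N) ℝ,
        (∀ n m : Fin N, A n m = if m = n then -1 else if m = n + 1 then 1 else 0) →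
      ∀ B : Matrix (Fin N ⊕ Fin N) (Fin N ⊕ Fin N) ℝ,
        B = Matrix.fromBlocks 0 A ((γ / T) • 1 - (α ^ 2) • Aᵀ) (-β • (Aᵀ * A) - γ • 1) →
      ∀ lam : ℂ, lam ∈ spectrum ℂ (B.map (algebraMap ℝ ℂ)) → lam ≠ 0 → lam.re < 0) :=
  closedloop_sufficient_stability_general N α γ T hγ hT hcond
end
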